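/- Fix integers n ≥ 1, m ≥ 2 and real numbers p ∈ [0,1) and ϱ with 0 ≤ ϱ ≤ p and ϱ < 1, and set p̃ = (p − ϱ)/(1 − ϱ), so that p̃ < p and p = ϱ + (1−ϱ)p̃. Consider the two-stage model: with probability ϱ the example is easy-to-classify, in which case the correct class c* is the unique Plurality winner with certainty; with probability 1 − ϱ the n classifiers vote independently, each voting for c* with probability p̃/D̃ and for each of the other m−1 classes with probability (1−p̃)/D̃, where D̃ = p̃ + (m−1)(1−p̃). Then the probability that c* is the unique Plurality winner is at least (1 − ϱ)·T(p̃) + ϱ, where T(q) = (1/K(q)) Σ_{i=⌈n/m⌉}^{n} φ_i (n−i)! C(n,i) q^i (1−q)^{n−i}, φ_i is the coefficient of x^{n−i} in (Σ_{j=0}^{i−1} x^j/j!)^{m−1}, and K(q) = Σ_{j=0}^{n} C(n,j) q^j (m−1)^{n−j} (1−q)^{n−j}. -/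

import Mathlib

open Finset

/-- `phi n m i` is the coefficient of `x^(n-i)` in the expansion of the generating function
`G^m_i(x) = (∑_{j=0}^{i-1} x^j / j!)^(m-1)`. -/
noncomputable def phi (n m i : ℕ) : ℝ :=
  (((∑ j ∈ Finset.range i, Polynomial.C ((1 : ℝ) / (Nat.factorial j)) * Polynomial.X ^ j)) ^ (m - 1)).coeff (n - i)

/-- The normalization constant `K(q) = ∑_{j=0}^n C(n,j) q^j (m-1)^(n-j) (1-q)^(n-j)`. -/
noncomputable def Knorm (n m : ℕ) (q : ℝ) : ℝ :=
  ∑ j ∈ Finset.range (n + 1),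
    (n.choose j : ℝ) * q ^ j * ((m : ℝ) - 1) ^ (n - j) * (1 - q) ^ (n - j)

/-- `T(q) = (1/K(q)) ∑_{i=⌈n/m⌉}^n φ_i (n-i)! C(n,i) q^i (1-q)^(n-i)`. -/
noncomputable def Tprob (n m : ℕ) (q : ℝ) : ℝ :=
  (1 / Knorm n m q) *
    ∑ i ∈ Finset.Icc (⌈(n : ℚ) / (m : ℚ)⌉₊) n,
      phi n m i * ((n - i).factorial : ℝ) * (n.choose i : ℝ) * q ^ i * (1 - q) ^ (n - i)

/-- The set of voting profiles in which `cstar` receives strictly more votes than every other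
class, i.e. `cstar` is the unique Plurality winner. -/
def wins (n m : ℕ) (cstar : Fin m) : Finset (Fin n → Fin m) :=
  Finset.univ.filter (fun f => ∀ c : Fin m, c ≠ cstar →
    (Finset.univ.filter (fun v : Fin n => f v = c)).card <
      (Finset.univ.filter (fun v : Fin n => f v = cstar)).card)

/-!
With `D = q + (m - 1)(1 - q)` the binomial theorem gives `K(q) = D ^ n`, and a profile in which
`c*` gets `i` votes has weight `q ^ i (1 - q) ^ (n - i) / D ^ n`. It is winning iff the other
`n - i` voters spread over the remaining `m - 1` classes with fewer than `i` votes each: there are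
`C(n, i)` choices for the voters of `c*` and `(n - i)! φ_i` such spreads, because
`(∑_{j<i} x^j / j!) ^ (m - 1)` is the exponential generating function of maps into `m - 1` classes
all of whose fibers have fewer than `i` points. A winning profile has `n ≤ m i`, so the terms with
`i < ⌈n/m⌉` vanish and `T(p̃)` is exactly the probability that `c*` wins on a hard example.
-/

open scoped Nat

variable {α γ : Type*} [Fintype α] [DecidableEq α] [DecidableEq γ]

def boundedFiberMaps (α β : Type*) [Fintype α] [DecidableEq α] [Fintype β] [DecidableEq β]
    (i : ℕ) : Finset (α → β) :=
  univ.filter fun g => ∀ b, #(univ.filter fun x => g x = b) < i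

def boundedFiberCount (k r i : ℕ) : ℕ := #(boundedFiberMaps (Fin k) (Fin r) i)

theorem card_boundedFiberMaps (β : Type*) [Fintype β] [DecidableEq β] (i : ℕ) :
    #(boundedFiberMaps α β i) = boundedFiberCount (Fintype.card α) (Fintype.card β) i := by
  let eα := Fintype.equivFin α
  let eβ := Fintype.equivFin β
  refine card_equiv (eα.arrowCongr eβ) fun g => ?_
  simp only [boundedFiberMaps, mem_filter, mem_univ, true_and]
  refine eβ.forall_congr fun {b} => ?_
  rw [← card_map eα.toEmbedding, map_filter]
  simp [Function.comp_def, Equiv.arrowCongr_apply]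

theorem card_filter_subtype_notMem_eq {g : α → γ} {c₀ c : γ} {s : Finset α}
    (hs : univ.filter (fun x => g x = c₀) = s) (hc : c ≠ c₀) :
    #(univ.filter fun x : {x // x ∉ s} => g x = c) = #(univ.filter fun x => g x = c) := by
  refine card_bij (fun x _ => x.1) (by simp) (fun _ _ _ _ => Subtype.ext) ?_
  intro x hx
  have hxs : x ∉ s := by
    simp only [← hs, mem_filter, mem_univ, true_and]
    simp_all
  exact ⟨⟨x, hxs⟩, by simpa using hx, rfl⟩

theorem card_filter_fiber_eq_and_bounded [Fintype γ] (c₀ : γ) (s : Finset α) (i : ℕ) :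
    #(univ.filter fun g : α → γ => univ.filter (fun x => g x = c₀) = s ∧
        ∀ c, c ≠ c₀ → #(univ.filter fun x => g x = c) < i) =
      #(boundedFiberMaps {x // x ∉ s} {c // c ≠ c₀} i) := by
  have hne {g : α → γ} (hs : univ.filter (fun x => g x = c₀) = s) (x : {x // x ∉ s}) :
      g x ≠ c₀ := fun h => x.2 (hs ▸ by simpa using h)
  have hfib (h : {x // x ∉ s} → {c // c ≠ c₀}) :
      univ.filter (fun x => (if hx : x ∈ s then c₀ else h ⟨x, hx⟩) = c₀) = s := by
    ext x
    by_cases hx : x ∈ s <;> simp [hx, (h _).2]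
  refine card_bij' (fun g hg x => ⟨g x, hne (mem_filter.1 hg).2.1 x⟩)
    (fun h _ x => if hx : x ∈ s then c₀ else h ⟨x, hx⟩) ?_ ?_ ?_ ?_
  · intro g hg
    simp only [mem_filter, mem_univ, true_and, boundedFiberMaps] at hg ⊢
    intro c
    simpa only [Subtype.ext_iff, card_filter_subtype_notMem_eq hg.1 c.2] using hg.2 c c.2
  · intro h hh
    simp only [mem_filter, mem_univ, true_and, boundedFiberMaps] at hh ⊢
    refine ⟨hfib h, fun c hc => ?_⟩
    rw [← card_filter_subtype_notMem_eq (hfib h) hc]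
    have hcompl (x : {x // x ∉ s}) : (if hx : x.1 ∈ s then c₀ else (h ⟨x, hx⟩).1) = h x :=
      dif_neg x.2
    simpa only [hcompl, Subtype.ext_iff] using hh ⟨c, hc⟩
  · intro g hg
    funext x
    by_cases hx : x ∈ s
    · rw [← (mem_filter.1 hg).2.1] at hx
      simp_all
    · simp [hx]
  · intro h _
    funext x
    simp [x.2]

theorem boundedFiberCount_succ (k r i : ℕ) :
    boundedFiberCount k (r + 1) i =
      ∑ b ∈ range (k + 1), if b < i then k.choose b * boundedFiberCount (k - b) r i else 0 := by
  let fiber (g : Fin k → Fin (r + 1)) : Finset (Fin k) := univ.filter fun x => g x = 0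
  have hterm (s : Finset (Fin k)) :
      #((boundedFiberMaps (Fin k) (Fin (r + 1)) i).filter fun g => fiber g = s) =
        if #s < i then boundedFiberCount (k - #s) r i else 0 := by
    split_ifs with hs
    · have hcount := card_boundedFiberMaps (α := {x // x ∉ s}) {c : Fin (r + 1) // c ≠ 0} i
      simp only [Fintype.card_subtype_compl, Fintype.card_fin, Fintype.card_coe,
        Fintype.card_subtype_eq, Nat.add_sub_cancel] at hcount
      rw [← hcount, ← card_filter_fiber_eq_and_bounded 0 s i]
      congr 1
      ext g
      simp only [boundedFiberMaps, mem_filter, mem_univ, true_and]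
      refine ⟨fun ⟨hb, hg⟩ => ⟨hg, fun c _ => hb c⟩, ?_⟩
      rintro ⟨hg, hb⟩
      refine ⟨fun c => ?_, hg⟩
      rcases eq_or_ne c 0 with rfl | hc
      · exact hg ▸ hs
      · exact hb c hc
    · refine card_eq_zero.2 (filter_eq_empty_iff.2 fun g hg hgs => hs ?_)
      rw [← hgs]
      simp only [boundedFiberMaps, mem_filter] at hg
      exact hg.2 0
  rw [boundedFiberCount, card_eq_sum_card_fiberwise (t := univ.powerset)
    (fun g _ => mem_powerset.2 (subset_univ (fiber g))), sum_congr rfl fun s _ => hterm s,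
    sum_powerset_apply_card (fun b => if b < i then boundedFiberCount (k - b) r i else 0)]
  simp [mul_ite]

theorem card_filter_wins (n m i : ℕ) (cstar : Fin m) :
    #((wins n m cstar).filter fun f => #(univ.filter fun v => f v = cstar) = i) =
      n.choose i * boundedFiberCount (n - i) (m - 1) i := by
  let fiber (f : Fin n → Fin m) : Finset (Fin n) := univ.filter fun v => f v = cstar
  have hterm (s : Finset (Fin n)) (hs : #s = i) :
      #(((wins n m cstar).filter fun f => #(fiber f) = i).filter fun f => fiber f = s) =
        boundedFiberCount (n - i) (m - 1) i := by
    have hcount := card_boundedFiberMaps (α := {x // x ∉ s}) {c : Fin m // c ≠ cstar} i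
    simp only [Fintype.card_subtype_compl, Fintype.card_fin, Fintype.card_coe,
      Fintype.card_subtype_eq, hs] at hcount
    rw [← hcount, ← card_filter_fiber_eq_and_bounded cstar s i]
    congr 1
    ext f
    simp only [wins, mem_filter, mem_univ, true_and]
    constructor
    · rintro ⟨⟨hw, hi⟩, hf⟩
      exact ⟨hf, fun c hc => hi ▸ hw c hc⟩
    · rintro ⟨hf, hb⟩
      have hi : #(fiber f) = i := by rw [← hs, ← hf]
      exact ⟨⟨fun c hc => hi ▸ hb c hc, hi⟩, hf⟩
  rw [card_eq_sum_card_fiberwise (t := powersetCard i univ) (fun f hf => mem_powersetCard.2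
    ⟨subset_univ (fiber f), (mem_filter.1 hf).2⟩), sum_congr rfl fun s hs =>
    hterm s (mem_powersetCard.1 hs).2, sum_const, card_powersetCard, card_univ, Fintype.card_fin,
    smul_eq_mul]

section

open Polynomial

noncomputable def truncExp (i : ℕ) : ℝ[X] := ∑ j ∈ range i, C ((1 : ℝ) / (j ! : ℝ)) * X ^ j

theorem phi_eq_coeff_truncExp_pow (n m i : ℕ) :
    phi n m i = ((truncExp i) ^ (m - 1)).coeff (n - i) := rfl

theorem coeff_truncExp (i b : ℕ) : (truncExp i).coeff b = if b < i then 1 / (b ! : ℝ) else 0 := by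
  simp [truncExp, coeff_C_mul, coeff_X_pow]

theorem factorial_mul_coeff_truncExp_pow (i r k : ℕ) :
    (k ! : ℝ) * ((truncExp i) ^ r).coeff k = boundedFiberCount k r i := by
  induction r generalizing k with
  | zero => cases k <;> simp [boundedFiberCount, boundedFiberMaps, coeff_one]
  | succ r ih =>
    rw [pow_succ', coeff_mul, Nat.sum_antidiagonal_eq_sum_range_succ
      (fun a b => (truncExp i).coeff a * ((truncExp i) ^ r).coeff b), boundedFiberCount_succ,
      mul_sum]
    push_cast
    refine sum_congr rfl fun b hb => ?_
    have hbk : b ≤ k := Nat.lt_succ_iff.1 (mem_range.1 hb)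
    rw [coeff_truncExp]
    split_ifs with hbi
    · rw [← ih, ← Nat.choose_mul_factorial_mul_factorial hbk]
      push_cast
      field_simp
    · simp

end

theorem sum_prod_ite_eq_sum_card_filter {R : Type*} [CommSemiring R] (S : Finset (α → γ))
    (c : γ) (a b : R) :
    ∑ f ∈ S, ∏ x, (if f x = c then a else b) =
      ∑ i ∈ range (Fintype.card α + 1),
        #(S.filter fun f => #(univ.filter fun x => f x = c) = i) *
          (a ^ i * b ^ (Fintype.card α - i)) := by
  have hprod (f : α → γ) : ∏ x, (if f x = c then a else b) =
      a ^ #(univ.filter fun x => f x = c) *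
        b ^ (Fintype.card α - #(univ.filter fun x => f x = c)) := by
    rw [prod_ite, prod_const, prod_const, ← card_compl, compl_filter]
  rw [← sum_fiberwise_of_maps_to (t := range (Fintype.card α + 1))
    (g := fun f => #(univ.filter fun x => f x = c))
    fun f _ => mem_range.2 (Nat.lt_succ_of_le (card_le_univ _))]
  refine sum_congr rfl fun i _ => ?_
  rw [sum_congr rfl fun f hf => by rw [hprod f, (mem_filter.1 hf).2], sum_const, nsmul_eq_mul]

theorem le_mul_card_filter_of_mem_wins {n m : ℕ} {cstar : Fin m} {f : Fin n → Fin m}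
    (hf : f ∈ wins n m cstar) : n ≤ #(univ.filter fun v => f v = cstar) * m := by
  have hw := (mem_filter.1 hf).2
  calc n = ∑ c : Fin m, #(univ.filter fun v => f v = c) := by
        rw [← card_eq_sum_card_fiberwise fun v _ => mem_univ (f v), card_univ, Fintype.card_fin]
    _ ≤ ∑ _c : Fin m, #(univ.filter fun v => f v = cstar) := by
        refine sum_le_sum fun c _ => ?_
        rcases eq_or_ne c cstar with rfl | hc
        · exact le_rfl
        · exact (hw c hc).le
    _ = #(univ.filter fun v => f v = cstar) * m := by
        rw [sum_const, card_univ, Fintype.card_fin, smul_eq_mul, mul_comm]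

theorem Knorm_eq (n m : ℕ) (q : ℝ) : Knorm n m q = (q + ((m : ℝ) - 1) * (1 - q)) ^ n := by
  rw [add_pow, Knorm]
  refine sum_congr rfl fun j _ => ?_
  rw [mul_pow]
  ring

theorem Tprob_eq_sum_wins (n m : ℕ) (cstar : Fin m) (q : ℝ) :
    Tprob n m q = ∑ f ∈ wins n m cstar, ∏ v : Fin n,
      (if f v = cstar then q / (q + ((m : ℝ) - 1) * (1 - q))
        else (1 - q) / (q + ((m : ℝ) - 1) * (1 - q))) := by
  let W (i : ℕ) : ℕ := #((wins n m cstar).filter fun f => #(univ.filter fun v => f v = cstar) = i)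
  have hW (i : ℕ) : phi n m i * ((n - i)! : ℝ) * (n.choose i : ℝ) = W i := by
    rw [show W i = n.choose i * boundedFiberCount (n - i) (m - 1) i from
      card_filter_wins n m i cstar, phi_eq_coeff_truncExp_pow, Nat.cast_mul,
      ← factorial_mul_coeff_truncExp_pow]
    ring
  have hW_eq_zero {i : ℕ} (hi : i < ⌈(n : ℚ) / (m : ℚ)⌉₊) : W i = 0 := by
    have hm : (0 : ℚ) < m := by exact_mod_cast cstar.pos
    have hmi : i * m < n := by
      have := Nat.lt_ceil.1 hi
      rwa [lt_div_iff₀ hm, ← Nat.cast_mul, Nat.cast_lt] at this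
    refine card_eq_zero.2 (filter_eq_empty_iff.2 fun f hf hfi => ?_)
    exact (le_mul_card_filter_of_mem_wins hf).not_gt (hfi ▸ hmi)
  have hsum : ∑ i ∈ Icc (⌈(n : ℚ) / (m : ℚ)⌉₊) n,
      phi n m i * ((n - i)! : ℝ) * (n.choose i : ℝ) * q ^ i * (1 - q) ^ (n - i) =
      ∑ i ∈ range (n + 1), (W i : ℝ) * (q ^ i * (1 - q) ^ (n - i)) := by
    refine sum_subset_zero_on_sdiff (fun i hi => ?_) (fun i hi => ?_) (fun i _ => ?_)
    · exact mem_range.2 (Nat.lt_succ_of_le (mem_Icc.1 hi).2)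
    · simp only [mem_sdiff, mem_range, mem_Icc] at hi
      rw [hW_eq_zero (by omega), Nat.cast_zero, zero_mul]
    · rw [← hW]; ring
  rw [sum_prod_ite_eq_sum_card_filter, Fintype.card_fin, Tprob, Knorm_eq, hsum, mul_sum]
  refine sum_congr rfl fun i hi => ?_
  rw [div_pow, div_pow, div_mul_div_comm, ← pow_add,
    Nat.add_sub_cancel' (Nat.lt_succ_iff.1 (mem_range.1 hi))]
  ring

theorem stmt13_general (n m : ℕ)
    (ϱ : ℝ)
    (ptilde : ℝ)
    (cstar : Fin m) (Dtilde : ℝ) (hDt : Dtilde = ptilde + ((m : ℝ) - 1) * (1 - ptilde)) :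
    (1 - ϱ) * Tprob n m ptilde + ϱ ≤
      ϱ + (1 - ϱ) *
        (∑ f ∈ wins n m cstar,
          ∏ v : Fin n, (if f v = cstar then ptilde / Dtilde else (1 - ptilde) / Dtilde)) := by
  subst hDt
  rw [Tprob_eq_sum_wins n m cstar ptilde]
  exact (add_comm _ _).le

/-- Two-stage model: with probability `ϱ` the example is easy-to-classify and `cstar` wins
with certainty; with probability `1 - ϱ` the `n` classifiers vote independently with accuracy
`p̃ = (p - ϱ)/(1 - ϱ)` (each voting for `cstar` with probability `p̃/D̃` and for each other
class with probability `(1-p̃)/D̃`, `D̃ = p̃ + (m-1)(1-p̃)`).  The probability that `cstar` is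
the unique Plurality winner is at least `(1-ϱ)·T(p̃) + ϱ`. -/
theorem stmt13 (n m : ℕ) (hn : 1 ≤ n) (hm : 2 ≤ m)
    (p ϱ : ℝ) (hp0 : 0 ≤ p) (hp1 : p < 1) (hϱ0 : 0 ≤ ϱ) (hϱp : ϱ ≤ p) (hϱ1 : ϱ < 1)
    (ptilde : ℝ) (hpt : ptilde = (p - ϱ) / (1 - ϱ))
    (cstar : Fin m) (Dtilde : ℝ) (hDt : Dtilde = ptilde + ((m : ℝ) - 1) * (1 - ptilde)) :
    (1 - ϱ) * Tprob n m ptilde + ϱ ≤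
      ϱ + (1 - ϱ) *
        (∑ f ∈ wins n m cstar,
          ∏ v : Fin n, (if f v = cstar then ptilde / Dtilde else (1 - ptilde) / Dtilde)) :=
  stmt13_general n m ϱ ptilde cstar Dtilde hDt
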